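/- Let n ≥ 2 and let c = (c_1, …, c_n) ∈ ℝ^n have positive entries arranged in descending order with c_1 = 1 and c_2 > 0, and let ‖·‖_c be the c-norm on B(H). Then two nonzero operators A, B ∈ B(H) satisfy ‖AB‖_c = ‖A‖_c · ‖B‖_c if and only if there exist nonzero vectors x, y, z ∈ H such that A = x y* and B = y z*. -/

import Mathlib

open scoped InnerProductSpace

variable {H : Type*} [NormedAddCommGroup H] [InnerProductSpace ℂ H] [CompleteSpace H]

/-- The `k`-th singular value (1-indexed) of a bounded operator `A`:
`s_k(A) = inf {‖A - X‖ : rank X < k}`. -/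
noncomputable def sval (k : ℕ) (A : H →L[ℂ] H) : ℝ :=
  sInf { r : ℝ | ∃ X : H →L[ℂ] H,
    Module.rank ℂ (LinearMap.range (X : H →ₗ[ℂ] H)) < (k : Cardinal) ∧ r = ‖A - X‖ }

/-- `f : ℝ^n → ℝ` is a symmetric norm: a norm invariant under permutations of the
coordinates and under sign changes of the coordinates. -/
structure IsSymmetricNorm (n : ℕ) (f : (Fin n → ℝ) → ℝ) : Prop where
  triangle : ∀ x y, f (x + y) ≤ f x + f y
  homog : ∀ (t : ℝ) (x), f (t • x) = |t| * f x
  definite : ∀ x, x ≠ 0 → 0 < f x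
  perm_invariant : ∀ (σ : Equiv.Perm (Fin n)) (x), f (fun i => x (σ i)) = f x
  sign_invariant : ∀ (ε : Fin n → ℝ), (∀ i, ε i = 1 ∨ ε i = -1) →
    ∀ x, f (fun i => ε i * x i) = f x

/-- The unitarily invariant norm induced by a symmetric norm `f` on `ℝ^n`:
`‖A‖_f = f (s_1(A), …, s_n(A))`. -/
noncomputable def normf (n : ℕ) (f : (Fin n → ℝ) → ℝ) (A : H →L[ℂ] H) : ℝ :=
  f (fun j : Fin n => sval (j.1 + 1) A)

/-- The `c`-norm `‖A‖_c = Σ_j c_j s_j(A)`. -/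
noncomputable def cnorm (n : ℕ) (c : Fin n → ℝ) (A : H →L[ℂ] H) : ℝ :=
  ∑ j : Fin n, c j * sval (j.1 + 1) A

/-- The rank-one operator `x y* : z ↦ ⟨z, y⟩ x` (inner product linear in `z`). -/
noncomputable def rankOne (x y : H) : H →L[ℂ] H :=
  (innerSL ℂ y).smulRight x

/-!
Since `s_k(AB) ≤ ‖A‖ s_k(B)` and `s_k(AB) ≤ s_k(A) ‖B‖`, one always has `‖AB‖_c ≤ ‖A‖ ‖B‖_c` and
`‖AB‖_c ≤ ‖A‖_c ‖B‖`, while `‖T‖ = s_1(T) ≤ ‖T‖_c`. Hence `‖AB‖_c = ‖A‖_c ‖B‖_c` forces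
`‖A‖_c = ‖A‖` and `‖B‖_c = ‖B‖`, and since `c_2 > 0` this gives `s_2(A) = s_2(B) = 0`.
An operator with `s_2 = 0` is a norm limit of operators of rank at most one; the identity
`⟪Tv, Tv⟫ Tw = ⟪Tv, Tw⟫ Tv`, which characterises those, passes to the limit, so `A = x y*` and
`B = u z*`. Finally `‖x y* u z*‖_c = |⟪y, u⟫| ‖x‖ ‖z‖`, and equality in the Cauchy–Schwarz
inequality makes `u` a multiple of `y`.
-/

open ContinuousLinearMap

section RankAtMostOne

variable {𝕜 E F : Type*} [RCLike 𝕜] [NormedAddCommGroup E] [InnerProductSpace 𝕜 E]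
  [NormedAddCommGroup F] [InnerProductSpace 𝕜 F]

theorem inner_self_smul_eq_inner_smul_of_rank_le_one {T : E →L[𝕜] F}
    (hT : (T : E →ₗ[𝕜] F).rank ≤ 1) (v w : E) :
    ⟪T v, T v⟫_𝕜 • T w = ⟪T v, T w⟫_𝕜 • T v := by
  obtain ⟨e, he⟩ := rank_le_one_iff.mp hT
  obtain ⟨a, ha⟩ := he ⟨T v, LinearMap.mem_range_self _ v⟩
  obtain ⟨b, hb⟩ := he ⟨T w, LinearMap.mem_range_self _ w⟩
  replace ha : a • (e : F) = T v := congrArg Subtype.val ha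
  replace hb : b • (e : F) = T w := congrArg Subtype.val hb
  rw [← ha, ← hb]
  simp only [inner_smul_left, inner_smul_right, smul_smul]
  congr 1
  ring

theorem isClosed_setOf_inner_self_smul_eq_inner_smul :
    IsClosed {T : E →L[𝕜] F | ∀ v w, ⟪T v, T v⟫_𝕜 • T w = ⟪T v, T w⟫_𝕜 • T v} := by
  simp only [Set.ofPred_forall]
  exact isClosed_iInter fun v ↦ isClosed_iInter fun w ↦ isClosed_eq (by fun_prop) (by fun_prop)

theorem exists_eq_rankOne_of_inner_self_smul_eq_inner_smul [CompleteSpace E] [CompleteSpace F]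
    {T : E →L[𝕜] F} (hT : T ≠ 0) (h : ∀ v w, ⟪T v, T v⟫_𝕜 • T w = ⟪T v, T w⟫_𝕜 • T v) :
    ∃ x y, x ≠ 0 ∧ y ≠ 0 ∧ T = InnerProductSpace.rankOne 𝕜 x y := by
  obtain ⟨v, hv⟩ : ∃ v, T v ≠ 0 := by
    by_contra! hcon
    exact hT (ext hcon)
  have hvv : ⟪T v, T v⟫_𝕜 ≠ 0 := inner_self_ne_zero.mpr hv
  have hT_eq : T = InnerProductSpace.rankOne 𝕜 (T v)
      ((starRingEnd 𝕜) (⟪T v, T v⟫_𝕜)⁻¹ • adjoint T (T v)) := by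
    ext w
    rw [InnerProductSpace.rankOne_apply, inner_smul_left, starRingEnd_self_apply,
      adjoint_inner_left, mul_smul, ← h, smul_smul, inv_mul_cancel₀ hvv, one_smul]
  refine ⟨_, _, hv, fun hy ↦ hT ?_, hT_eq⟩
  rw [hT_eq, hy, map_zero]

theorem rank_rankOne_le_one (x : F) (y : E) :
    (InnerProductSpace.rankOne 𝕜 x y : E →ₗ[𝕜] F).rank ≤ 1 := by
  have hle : LinearMap.range (InnerProductSpace.rankOne 𝕜 x y : E →ₗ[𝕜] F) ≤ 𝕜 ∙ x := by
    rintro - ⟨w, rfl⟩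
    exact Submodule.mem_span_singleton.mpr ⟨_, rfl⟩
  exact (Submodule.rank_mono hle).trans ((rank_span_le _).trans_eq (Cardinal.mk_singleton x))

end RankAtMostOne

section SingularValues

variable {E : Type*} [NormedAddCommGroup E] [InnerProductSpace ℂ E]

theorem sval_nonneg (k : ℕ) (A : E →L[ℂ] E) : 0 ≤ sval k A :=
  Real.sInf_nonneg (by rintro r ⟨X, -, rfl⟩; exact norm_nonneg _)

theorem sval_le_norm_sub {k : ℕ} (A : E →L[ℂ] E) {X : E →L[ℂ] E}
    (hX : (X : E →ₗ[ℂ] E).rank < k) : sval k A ≤ ‖A - X‖ :=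
  csInf_le ⟨0, by rintro r ⟨X, -, rfl⟩; exact norm_nonneg _⟩ ⟨X, hX, rfl⟩

theorem sval_eq_zero_of_rank_lt {k : ℕ} {A : E →L[ℂ] E} (hA : (A : E →ₗ[ℂ] E).rank < k) :
    sval k A = 0 :=
  le_antisymm (by simpa using sval_le_norm_sub A hA) (sval_nonneg k A)

theorem sval_set_nonempty {k : ℕ} (hk : 0 < k) (A : E →L[ℂ] E) :
    { r : ℝ | ∃ X : E →L[ℂ] E,
      Module.rank ℂ (LinearMap.range (X : E →ₗ[ℂ] E)) < (k : Cardinal) ∧ r = ‖A - X‖ }.Nonempty :=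
  ⟨_, 0, by simpa [LinearMap.range_zero] using hk, rfl⟩

theorem sval_one (A : E →L[ℂ] E) : sval 1 A = ‖A‖ := by
  refine le_antisymm (by simpa using sval_le_norm_sub A (X := 0) (by simp)) ?_
  refine le_csInf (sval_set_nonempty one_pos A) ?_
  rintro r ⟨X, hX, rfl⟩
  have : X = 0 := coe_injective (by simpa [LinearMap.range_eq_bot] using hX)
  simp [this]

theorem sval_le_mul_sval {k : ℕ} (hk : 0 < k) {A B : E →L[ℂ] E} {C : ℝ} (hC : 0 ≤ C)
    (h : ∀ X : E →L[ℂ] E, (X : E →ₗ[ℂ] E).rank < k →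
      ∃ Y : E →L[ℂ] E, (Y : E →ₗ[ℂ] E).rank < k ∧ ‖B - Y‖ ≤ C * ‖A - X‖) :
    sval k B ≤ C * sval k A := by
  unfold sval
  rw [← smul_eq_mul, ← Real.sInf_smul_of_nonneg hC]
  refine le_csInf ((sval_set_nonempty hk A).smul_set) ?_
  rintro - ⟨-, ⟨X, hX, rfl⟩, rfl⟩
  obtain ⟨Y, hY, hBY⟩ := h X hX
  exact (sval_le_norm_sub B hY).trans hBY

theorem sval_comp_le_norm_mul {k : ℕ} (hk : 0 < k) (A B : E →L[ℂ] E) :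
    sval k (A ∘L B) ≤ ‖A‖ * sval k B :=
  sval_le_mul_sval hk (norm_nonneg A) fun X hX ↦
    ⟨A ∘L X, (LinearMap.rank_comp_le_right _ _).trans_lt hX, by
      rw [← comp_sub]; exact opNorm_comp_le A (B - X)⟩

theorem sval_comp_le_mul_norm {k : ℕ} (hk : 0 < k) (A B : E →L[ℂ] E) :
    sval k (A ∘L B) ≤ sval k A * ‖B‖ := by
  rw [mul_comm]
  exact sval_le_mul_sval hk (norm_nonneg B) fun X hX ↦
    ⟨X ∘L B, (LinearMap.rank_comp_le_left _ _).trans_lt hX, by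
      rw [← sub_comp, mul_comm]; exact opNorm_comp_le (A - X) B⟩

theorem mem_closure_of_sval_eq_zero {k : ℕ} (hk : 0 < k) {A : E →L[ℂ] E} (hA : sval k A = 0) :
    A ∈ closure {X : E →L[ℂ] E | (X : E →ₗ[ℂ] E).rank < k} := by
  refine Metric.mem_closure_iff.mpr fun ε hε ↦ ?_
  obtain ⟨-, ⟨X, hX, rfl⟩, hXε⟩ :=
    exists_lt_of_csInf_lt (sval_set_nonempty hk A) (hA.symm ▸ hε : sval k A < ε)
  exact ⟨X, hX, by rwa [dist_eq_norm]⟩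

theorem sval_rankOne {k : ℕ} (hk : 2 ≤ k) (x y : E) :
    sval k (InnerProductSpace.rankOne ℂ x y) = 0 :=
  sval_eq_zero_of_rank_lt <| (rank_rankOne_le_one x y).trans_lt (by exact_mod_cast hk)

theorem exists_eq_rankOne_of_sval_two_eq_zero {T : H →L[ℂ] H} (hT : T ≠ 0) (h : sval 2 T = 0) :
    ∃ x y, x ≠ 0 ∧ y ≠ 0 ∧ T = InnerProductSpace.rankOne ℂ x y := by
  refine exists_eq_rankOne_of_inner_self_smul_eq_inner_smul hT ?_
  refine closure_minimal (fun X hX ↦ ?_) isClosed_setOf_inner_self_smul_eq_inner_smul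
    (mem_closure_of_sval_eq_zero two_pos h)
  refine inner_self_smul_eq_inner_smul_of_rank_le_one ?_
  rw [← Order.lt_succ_iff, ← Nat.cast_one, Cardinal.succ_natCast]
  exact_mod_cast hX

end SingularValues

section CNorm

variable {E : Type*} [NormedAddCommGroup E] [InnerProductSpace ℂ E] {n : ℕ} {c : Fin n → ℝ}

theorem rankOne_eq (x y : E) : rankOne x y = InnerProductSpace.rankOne ℂ x y := rfl

theorem cnorm_comp_le_norm_mul (hc : ∀ i, 0 ≤ c i) (A B : E →L[ℂ] E) :
    cnorm n c (A ∘L B) ≤ ‖A‖ * cnorm n c B := by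
  rw [cnorm, cnorm, Finset.mul_sum]
  refine Finset.sum_le_sum fun j _ ↦ ?_
  rw [mul_left_comm]
  exact mul_le_mul_of_nonneg_left (sval_comp_le_norm_mul j.1.succ_pos A B) (hc j)

theorem cnorm_comp_le_mul_norm (hc : ∀ i, 0 ≤ c i) (A B : E →L[ℂ] E) :
    cnorm n c (A ∘L B) ≤ cnorm n c A * ‖B‖ := by
  rw [cnorm, cnorm, Finset.sum_mul]
  refine Finset.sum_le_sum fun j _ ↦ ?_
  rw [mul_assoc]
  exact mul_le_mul_of_nonneg_left (sval_comp_le_mul_norm j.1.succ_pos A B) (hc j)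

theorem norm_le_cnorm (h0 : 0 < n) (hc1 : c ⟨0, h0⟩ = 1) (hc : ∀ i, 0 ≤ c i) (T : E →L[ℂ] E) :
    ‖T‖ ≤ cnorm n c T := by
  rw [cnorm]
  simpa [hc1, sval_one] using Finset.single_le_sum (f := fun j : Fin n ↦ c j * sval (j.1 + 1) T)
    (fun j _ ↦ mul_nonneg (hc j) (sval_nonneg _ _)) (Finset.mem_univ ⟨0, h0⟩)

theorem cnorm_eq_norm_of_cnorm_comp_eq (h0 : 0 < n) (hc1 : c ⟨0, h0⟩ = 1) (hc : ∀ i, 0 ≤ c i)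
    {A B : E →L[ℂ] E} (hA : A ≠ 0) (hB : B ≠ 0)
    (h : cnorm n c (A ∘L B) = cnorm n c A * cnorm n c B) :
    cnorm n c A = ‖A‖ ∧ cnorm n c B = ‖B‖ := by
  have hApos : 0 < cnorm n c A := (norm_pos_iff.mpr hA).trans_le (norm_le_cnorm h0 hc1 hc A)
  have hBpos : 0 < cnorm n c B := (norm_pos_iff.mpr hB).trans_le (norm_le_cnorm h0 hc1 hc B)
  refine ⟨(norm_le_cnorm h0 hc1 hc A).antisymm' ?_, (norm_le_cnorm h0 hc1 hc B).antisymm' ?_⟩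
  · exact le_of_mul_le_mul_right (h ▸ cnorm_comp_le_norm_mul hc A B) hBpos
  · exact le_of_mul_le_mul_left (h ▸ cnorm_comp_le_mul_norm hc A B) hApos

theorem sval_two_eq_zero_of_cnorm_eq_norm (h1 : 1 < n) (hc1 : c ⟨0, by omega⟩ = 1)
    (hc2 : 0 < c ⟨1, h1⟩) (hc : ∀ i, 0 ≤ c i) {T : E →L[ℂ] E} (hT : cnorm n c T = ‖T‖) :
    sval 2 T = 0 := by
  have hpair : c ⟨0, by omega⟩ * sval 1 T + c ⟨1, h1⟩ * sval 2 T ≤ cnorm n c T := by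
    rw [← Finset.sum_pair (f := fun j : Fin n ↦ c j * sval (j.1 + 1) T) (by simp [Fin.ext_iff])]
    exact Finset.sum_le_sum_of_subset_of_nonneg (Finset.subset_univ _)
      fun j _ _ ↦ mul_nonneg (hc j) (sval_nonneg _ _)
  rw [hc1, one_mul, sval_one, hT] at hpair
  exact le_antisymm (nonpos_of_mul_nonpos_right (by linarith) hc2) (sval_nonneg 2 T)

theorem cnorm_rankOne (h0 : 0 < n) (hc1 : c ⟨0, h0⟩ = 1) (x y : E) :
    cnorm n c (InnerProductSpace.rankOne ℂ x y) = ‖x‖ * ‖y‖ := by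
  rw [cnorm, Finset.sum_eq_single_of_mem ⟨0, h0⟩ (Finset.mem_univ _)]
  · simp [hc1, sval_one]
  · intro j _ hj
    have : j.1 ≠ 0 := fun h ↦ hj (Fin.ext h)
    rw [sval_rankOne (by omega), mul_zero]

theorem cnorm_rankOne_comp_rankOne (h0 : 0 < n) (hc1 : c ⟨0, h0⟩ = 1) (x y u z : E) :
    cnorm n c (InnerProductSpace.rankOne ℂ x y ∘L InnerProductSpace.rankOne ℂ u z) =
      ‖⟪y, u⟫_ℂ‖ * ‖x‖ * ‖z‖ := by
  rw [InnerProductSpace.rankOne_comp_rankOne, ← smul_apply, ← map_smul, cnorm_rankOne h0 hc1,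
    norm_smul]

end CNorm

theorem exists_eq_rankOne_of_cnorm_eq_norm {n : ℕ} {c : Fin n → ℝ} (h1 : 1 < n)
    (hc1 : c ⟨0, by omega⟩ = 1) (hc2 : 0 < c ⟨1, h1⟩) (hc : ∀ i, 0 ≤ c i) {T : H →L[ℂ] H}
    (hT0 : T ≠ 0) (hT : cnorm n c T = ‖T‖) :
    ∃ x y, x ≠ 0 ∧ y ≠ 0 ∧ T = InnerProductSpace.rankOne ℂ x y :=
  exists_eq_rankOne_of_sval_two_eq_zero hT0 (sval_two_eq_zero_of_cnorm_eq_norm h1 hc1 hc2 hc hT)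

theorem stmt14 (n : ℕ) (hn : 2 ≤ n)
    (c : Fin n → ℝ) (hpos : ∀ i, 0 < c i)
    (hc1 : c ⟨0, by omega⟩ = 1) (hc2 : 0 < c ⟨1, by omega⟩) :
    ∀ A B : H →L[ℂ] H, A ≠ 0 → B ≠ 0 →
      (cnorm n c (A ∘L B) = cnorm n c A * cnorm n c B ↔
        ∃ x y z : H, x ≠ 0 ∧ y ≠ 0 ∧ z ≠ 0 ∧ A = rankOne x y ∧ B = rankOne y z) := by
  intro A B hA hB
  have h0 : 0 < n := by omega
  have hc i : 0 ≤ c i := (hpos i).le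
  simp only [rankOne_eq]
  constructor
  · intro h
    obtain ⟨hA', hB'⟩ := cnorm_eq_norm_of_cnorm_comp_eq h0 hc1 hc hA hB h
    obtain ⟨x, y, hx, hy, rfl⟩ := exists_eq_rankOne_of_cnorm_eq_norm hn hc1 hc2 hc hA hA'
    obtain ⟨u, z, hu, hz, rfl⟩ := exists_eq_rankOne_of_cnorm_eq_norm hn hc1 hc2 hc hB hB'
    simp only [cnorm_rankOne_comp_rankOne h0 hc1, cnorm_rankOne h0 hc1] at h
    have hyu : ‖⟪y, u⟫_ℂ‖ = ‖y‖ * ‖u‖ :=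
      mul_right_cancel₀ (by positivity : ‖x‖ * ‖z‖ ≠ 0) (by linear_combination h)
    obtain ⟨r, hr, rfl⟩ := (norm_inner_eq_norm_iff hy hu).mp hyu
    refine ⟨x, y, (starRingEnd ℂ) r • z, hx, hy, by simp [hr, hz], rfl, ?_⟩
    rw [map_smul, smul_apply, map_smulₛₗ, RCLike.conj_conj]
  · rintro ⟨x, y, z, hx, hy, hz, rfl, rfl⟩
    rw [cnorm_rankOne_comp_rankOne h0 hc1, cnorm_rankOne h0 hc1,
      cnorm_rankOne h0 hc1, inner_self_eq_norm_sq_to_K]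
    simp only [Complex.coe_algebraMap, norm_pow, Complex.norm_real, norm_norm]
    ring
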